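/- Steady-state failure probability of the centralized currency system: let n ≥ 2 and C ≥ 0 be integers and fix i : Fin n. Then (C + n − 1) · |{f : Fin n → ℕ | ∑_j f j = C and f i = 0}| = (n − 1) · |{f : Fin n → ℕ | ∑_j f j = C}|. Equivalently, under the uniform distribution on the states of a centralized currency system with n leaf nodes and total credit C (a state being an assignment f : Fin n → ℕ of nonnegative credit to each leaf with ∑_j f j = C), the probability that a fixed leaf i is bankrupt (f i = 0) equals (n−1)/(C+n−1); since a transaction fails in the centralized system exactly when the payer is bankrupt, this is the steady-state transaction failure probability. -/
import Mathlib

/-- Stars and bars as an equivalence with `Sym`. -/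
noncomputable def sumFixedEquivSym (α : Type*) [Fintype α] [DecidableEq α] (C : ℕ) :
    {f : α → ℕ // ∑ j, f j = C} ≃ Sym α C where
  toFun f := ⟨(Finsupp.equivFunOnFinite.symm f.1).toMultiset, by
    rw [Finsupp.card_toMultiset, Finsupp.sum_fintype]
    · exact f.2
    · intro _; rfl⟩
  invFun m := ⟨fun a => m.1.count a, by
    have h : ∑ a : α, m.1.count a = Multiset.card m.1 := by
      rw [← Multiset.toFinset_sum_count_eq m.1]
      exact (Finset.sum_subset (Finset.subset_univ _) (by
        intro x _ hx
        simpa [Multiset.count_eq_zero] using fun h => hx (Multiset.mem_toFinset.2 h))).symm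
    rw [h, m.2]⟩
  left_inv f := by
    ext a
    simp [Finsupp.count_toMultiset]
  right_inv m := by
    ext1
    simp only
    ext a
    simp [Finsupp.count_toMultiset]

lemma card_sumFixed (α : Type*) [Fintype α] [DecidableEq α] (C : ℕ) :
    Nat.card {f : α → ℕ // ∑ j, f j = C} = (C + Fintype.card α - 1).choose C := by
  rw [Nat.card_congr (sumFixedEquivSym α C), Nat.card_eq_fintype_card,
    Sym.card_sym_eq_choose, Nat.add_comm]

/-- Equivalence removing a coordinate forced to be zero. -/
def zeroAtEquiv (n C : ℕ) (i : Fin n) :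
    {f : Fin n → ℕ // (∑ j, f j = C) ∧ f i = 0} ≃
      {g : {j : Fin n // j ≠ i} → ℕ // ∑ j, g j = C} where
  toFun f := ⟨fun j => f.1 j.1, by
    have h1 : ∑ j ∈ Finset.univ.erase i, f.1 j
        = ∑ j : {j : Fin n // j ≠ i}, f.1 j.1 :=
      Finset.sum_subtype _ (fun x => by simp) f.1
    rw [← h1, Finset.sum_erase _ f.2.2, f.2.1]⟩
  invFun g := ⟨fun j => if h : j = i then 0 else g.1 ⟨j, h⟩, by
    refine ⟨?_, by simp⟩
    have h0 : ∑ j ∈ Finset.univ.erase i, (if h : j = i then 0 else g.1 ⟨j, h⟩)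
        = ∑ j : Fin n, (if h : j = i then 0 else g.1 ⟨j, h⟩) :=
      Finset.sum_erase _ (by simp)
    have h1 : ∑ j ∈ Finset.univ.erase i, (if h : j = i then 0 else g.1 ⟨j, h⟩)
        = ∑ j : {j : Fin n // j ≠ i}, (if h : (j : Fin n) = i then 0 else g.1 ⟨j, h⟩) :=
      Finset.sum_subtype _ (fun x => by simp) _
    have h2 : ∑ j : {j : Fin n // j ≠ i}, (if h : (j : Fin n) = i then 0 else g.1 ⟨j, h⟩)
        = ∑ j : {j : Fin n // j ≠ i}, g.1 j :=
      Finset.sum_congr rfl (fun x _ => by simp [x.2])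
    rw [← h0, h1, h2, g.2]⟩
  left_inv f := by
    ext a
    by_cases h : a = i
    · simp [h, f.2.2]
    · simp [h]
  right_inv g := by
    ext a
    simp [a.2]

/-- Steady-state failure probability of the centralized currency system: among the states
`f : Fin n → ℕ` with total credit `∑ j, f j = C`, the fraction in which a fixed leaf `i`
is bankrupt (`f i = 0`) equals `(n−1)/(C+n−1)`. -/
theorem stmt19 (n C : ℕ) (hn : 2 ≤ n) (i : Fin n) :
    (C + n - 1) * {f : Fin n → ℕ | (∑ j, f j = C) ∧ f i = 0}.ncard =
      (n - 1) * {f : Fin n → ℕ | ∑ j, f j = C}.ncard := by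
  obtain ⟨m, rfl⟩ : ∃ m, n = m + 2 := ⟨n - 2, by omega⟩
  have hcard : Fintype.card {j : Fin (m + 2) // j ≠ i} = m + 1 := by
    simp [Fintype.card_subtype_compl]
  have h1 : {f : Fin (m + 2) → ℕ | ∑ j, f j = C}.ncard = (C + m + 1).choose C := by
    rw [← Nat.card_coe_set_eq]
    have h : Nat.card {f : Fin (m + 2) → ℕ | ∑ j, f j = C}
        = Nat.card {f : Fin (m + 2) → ℕ // ∑ j, f j = C} := rfl
    rw [h, card_sumFixed]
    norm_num
    rw [← Nat.add_assoc]
  have h2 : {f : Fin (m + 2) → ℕ | (∑ j, f j = C) ∧ f i = 0}.ncard = (C + m).choose C := by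
    rw [← Nat.card_coe_set_eq]
    have h : Nat.card {f : Fin (m + 2) → ℕ | (∑ j, f j = C) ∧ f i = 0}
        = Nat.card {f : Fin (m + 2) → ℕ // (∑ j, f j = C) ∧ f i = 0} := rfl
    rw [h, Nat.card_congr (zeroAtEquiv (m + 2) C i), card_sumFixed, hcard]
    norm_num
  rw [h1, h2]
  have e1 : (C + m).choose C = (C + m).choose m := by
    have h := Nat.choose_symm (Nat.le_add_right C m)
    rw [Nat.add_sub_cancel_left] at h
    exact h.symm
  have e2 : (C + m + 1).choose C = (C + m + 1).choose (m + 1) := by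
    have h := Nat.choose_symm (Nat.le_add_right C (m + 1))
    rw [Nat.add_sub_cancel_left C (m + 1)] at h
    exact h.symm
  have key := Nat.add_one_mul_choose_eq (C + m) m
  have hl : C + (m + 2) - 1 = C + m + 1 := rfl
  have hr : m + 2 - 1 = m + 1 := rfl
  rw [hl, hr, e1, e2]
  calc (C + m + 1) * (C + m).choose m = Nat.succ (C + m) * (C + m).choose m := by
        rw [Nat.succ_eq_add_one]
    _ = (C + m + 1).choose (m + 1) * (m + 1) := key
    _ = (m + 1) * (C + m + 1).choose (m + 1) := Nat.mul_comm _ _
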